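/- arXiv:1607.04026 — 5 statements merged into one kernel-verified Lean document; each statement's English description precedes it below -/
import Mathlib

section
/- Let n ∈ ℕ and let A be an n×n real matrix. For 1 ≤ k ≤ n−1 define the (n−k)×(n−k) matrix B_k indexed by i, j ∈ {k+1, …, n} with entries B_k(i,j) := det(A restricted to rows {1, …, k, i} and columns {1, …, k, j}). Then det(B_k) = (det(A restricted to rows and columns {1, …, k}))^{n−k−1} · det(A). -/
/-!
If the leading block `P` of `A = [P Q; C D]` is invertible, each bordered minor is `det P` times
an entry of the Schur complement `D - C P⁻¹ Q`, so the matrix of bordered minors has determinant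
`(det P) ^ card p * det (D - C P⁻¹ Q) = (det P) ^ (card p - 1) * det A`. In general, apply this to
`charmatrix (-A)` over the fraction ring of `R[X]`, whose leading block has monic (hence
invertible) determinant, and then specialise `X` to `0`.
-/

open Matrix Polynomial

namespace Matrix

variable {m p R S : Type*} [Fintype m] [DecidableEq m]

def sylvesterMatrix [CommRing R] (A : Matrix (m ⊕ p) (m ⊕ p) R) : Matrix p p R :=
  of fun i j => det (A.submatrix (Sum.elim Sum.inl fun _ : Unit => Sum.inr i)
    (Sum.elim Sum.inl fun _ : Unit => Sum.inr j))

lemma sylvesterMatrix_map [CommRing R] [CommRing S] (A : Matrix (m ⊕ p) (m ⊕ p) R)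
    (f : R →+* S) :
    sylvesterMatrix (A.map f) = (sylvesterMatrix A).map f := by
  ext i j
  simp only [sylvesterMatrix, of_apply, map_apply, RingHom.map_det]
  rfl

lemma toBlocks₁₁_map {n o α β : Type*} (A : Matrix (n ⊕ o) (n ⊕ o) α) (f : α → β) :
    (A.map f).toBlocks₁₁ = A.toBlocks₁₁.map f :=
  rfl

lemma sylvesterMatrix_eq_smul_schur [CommRing R] (A : Matrix (m ⊕ p) (m ⊕ p) R)
    [Invertible A.toBlocks₁₁] :
    sylvesterMatrix A = A.toBlocks₁₁.det •
      (A.toBlocks₂₂ - A.toBlocks₂₁ * ⅟A.toBlocks₁₁ * A.toBlocks₁₂) := by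
  ext i j
  have hblocks : A.submatrix (Sum.elim Sum.inl fun _ : Unit => Sum.inr i)
      (Sum.elim Sum.inl fun _ : Unit => Sum.inr j) =
      fromBlocks A.toBlocks₁₁ (A.toBlocks₁₂.submatrix id fun _ : Unit => j)
        (A.toBlocks₂₁.submatrix (fun _ : Unit => i) id) (of fun _ _ => A.toBlocks₂₂ i j) := by
    ext (a | a) (b | b) <;> rfl
  rw [sylvesterMatrix, of_apply, hblocks, det_fromBlocks₁₁]
  simp [det_unique, mul_apply]

variable [Fintype p] [DecidableEq p]

theorem det_sylvesterMatrix_of_invertible [CommRing R] [Nonempty p]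
    (A : Matrix (m ⊕ p) (m ⊕ p) R) [Invertible A.toBlocks₁₁] :
    det (sylvesterMatrix A) = det A.toBlocks₁₁ ^ (Fintype.card p - 1) * det A := by
  have hA := det_fromBlocks₁₁ A.toBlocks₁₁ A.toBlocks₁₂ A.toBlocks₂₁ A.toBlocks₂₂
  rw [fromBlocks_toBlocks] at hA
  rw [sylvesterMatrix_eq_smul_schur, det_smul, hA, ← mul_assoc, ← pow_succ,
    Nat.sub_add_cancel Fintype.card_pos]

lemma toBlocks₁₁_charmatrix [CommRing R] (A : Matrix (m ⊕ p) (m ⊕ p) R) :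
    (charmatrix A).toBlocks₁₁ = charmatrix A.toBlocks₁₁ := by
  conv_lhs => rw [← fromBlocks_toBlocks A, charmatrix_fromBlocks, toBlocks_fromBlocks₁₁]

lemma charmatrix_neg_map_eval_zero [CommRing R] {n : Type*} [Fintype n] [DecidableEq n]
    (A : Matrix n n R) : (charmatrix (-A)).map (eval 0) = A := by
  ext i j
  by_cases h : i = j
  · subst h; simp [charmatrix_apply_eq]
  · simp [charmatrix_apply_ne _ _ _ h]

theorem det_sylvesterMatrix [CommRing R] [Nonempty p] (A : Matrix (m ⊕ p) (m ⊕ p) R) :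
    det (sylvesterMatrix A) = det A.toBlocks₁₁ ^ (Fintype.card p - 1) * det A := by
  set Y := charmatrix (-A)
  let φ := algebraMap R[X] (FractionRing R[X])
  have hY : det (sylvesterMatrix Y) = det Y.toBlocks₁₁ ^ (Fintype.card p - 1) * det Y := by
    have hmonic : (det Y.toBlocks₁₁).Monic := by
      rw [toBlocks₁₁_charmatrix]
      exact charpoly_monic _
    have : Invertible (Y.map φ).toBlocks₁₁ := invertibleOfIsUnitDet _ <| by
      simpa [toBlocks₁₁_map, RingHom.map_det] using
        IsLocalization.map_units (FractionRing R[X]) ⟨_, hmonic.mem_nonZeroDivisors⟩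
    apply IsFractionRing.injective R[X] (FractionRing R[X])
    simpa [sylvesterMatrix_map, toBlocks₁₁_map, RingHom.map_det] using
      det_sylvesterMatrix_of_invertible (Y.map φ)
  have hY₀ := congrArg (evalRingHom 0) hY
  simp only [map_mul, map_pow, RingHom.map_det, RingHom.mapMatrix_apply] at hY₀
  rwa [← sylvesterMatrix_map, ← toBlocks₁₁_map, coe_evalRingHom,
    charmatrix_neg_map_eval_zero] at hY₀

lemma det_submatrix_snoc [CommRing R] {ι : Type*} {k : ℕ} (A : Matrix ι ι R) (f g : Fin k → ι)
    (a b : ι) :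
    det (A.submatrix (Fin.snoc f a) (Fin.snoc g b)) =
      det (A.submatrix (Sum.elim f fun _ : Unit => a) (Sum.elim g fun _ : Unit => b)) := by
  let σ : Fin k ⊕ Unit ≃ Fin (k + 1) :=
    (Equiv.sumCongr (Equiv.refl _) finOneEquiv.symm).trans finSumFinEquiv
  have hσ : ∀ (h : Fin k → ι) (c : ι), Fin.snoc h c ∘ σ = Sum.elim h fun _ : Unit => c := by
    intro h c
    ext (s | _)
    · exact Fin.snoc_castSucc (α := fun _ => ι) ..
    · exact Fin.snoc_last (α := fun _ => ι) ..
  rw [← det_submatrix_equiv_self σ, submatrix_submatrix, hσ, hσ]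

end Matrix

/-- Sylvester's Determinant Identity. For an `n × n` real matrix `A` and `1 ≤ k ≤ n - 1`,
the matrix `B_k` indexed by `i, j ∈ {k+1,…,n}` with entries
`B_k(i,j) = det(A` restricted to rows `{1,…,k,i}` and columns `{1,…,k,j})` satisfies
`det B_k = (det(A restricted to rows and columns {1,…,k}))^(n-k-1) * det A`. -/
theorem sylvester_determinant_identity (n k : ℕ) (hkn : k + 1 ≤ n)
    (A : Matrix (Fin n) (Fin n) ℝ) :
    Matrix.det (Matrix.of fun i j : Fin (n - k) =>
      Matrix.det (A.submatrix
        (Fin.snoc (fun s : Fin k => Fin.castLE (by omega) s)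
          ⟨k + (i : ℕ), by have := i.isLt; omega⟩)
        (Fin.snoc (fun s : Fin k => Fin.castLE (by omega) s)
          ⟨k + (j : ℕ), by have := j.isLt; omega⟩)))
    = Matrix.det
        (A.submatrix (Fin.castLE (by omega : k ≤ n)) (Fin.castLE (by omega : k ≤ n)))
        ^ (n - k - 1) * Matrix.det A := by
  let e : Fin k ⊕ Fin (n - k) ≃ Fin n := finSumFinEquiv.trans (finCongr (by omega))
  have : Nonempty (Fin (n - k)) := ⟨⟨0, by omega⟩⟩
  have key := det_sylvesterMatrix (A.submatrix e e)
  rw [det_submatrix_equiv_self, Fintype.card_fin] at key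
  convert key using 3
  · ext i j
    rw [of_apply, det_submatrix_snoc, sylvesterMatrix, of_apply, submatrix_submatrix]
    congr 2 <;> ext (s | _) <;> rfl
  · rfl
end

section
/- Let n, k ∈ ℕ with k < n, let H ⊆ ℝ with |H| ≥ n, and let ω = (ω₁, …, ω_n) : H → ℝⁿ be an n-dimensional positive Chebyshev system over H such that ω_{⟨k⟩} and ω_{⟨k+1⟩} are k- and (k+1)-dimensional positive Chebyshev systems over H, respectively. Fix x₁ < … < x_k in H. Then the system of n−k functions x ↦ [x₁, …, x_k, x; ω_j]_{ω_{⟨k+1⟩}} (for k+1 ≤ j ≤ n) is an (n−k)-dimensional positive Chebyshev system over H ∖ {x₁, …, x_k}. -/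
/-- `Φ_ω(x₁,…,x_m) = det(ω_i(x_j))`. -/
noncomputable def Phi {m : ℕ} (ω : Fin m → ℝ → ℝ) (x : Fin m → ℝ) : ℝ :=
  Matrix.det (Matrix.of fun i j => ω i (x j))

/-- `ω` is an `m`-dimensional positive Chebyshev system over `H`. -/
def IsPosChebyshev {m : ℕ} (ω : Fin m → ℝ → ℝ) (H : Set ℝ) : Prop :=
  ∀ x : Fin m → ℝ, (∀ i, x i ∈ H) → StrictMono x → 0 < Phi ω x

/-- `f` is convex with respect to the `m`-dimensional system `ω` on `S`. -/
def IsConvexWRT {m : ℕ} (ω : Fin m → ℝ → ℝ) (S : Set ℝ) (f : ℝ → ℝ) : Prop :=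
  ∀ x : Fin (m + 1) → ℝ, (∀ i, x i ∈ S) → StrictMono x → 0 ≤ Phi (Fin.snoc ω f) x

/-- The generalized divided difference `[x₁,…,x_k; f]_{ω⟨k⟩}`:
the numerator replaces the last function `ω_k` by `f`. -/
noncomputable def divDiff {k : ℕ} (ω : Fin k → ℝ → ℝ) (f : ℝ → ℝ) (x : Fin k → ℝ) : ℝ :=
  Phi (fun i => if (i : ℕ) + 1 = k then f else ω i) x / Phi ω x

/-- Product of pairwise differences, in `if` form. -/
noncomputable def pd {m : ℕ} (z : Fin m → ℝ) : ℝ :=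
  ∏ p : Fin m, ∏ q : Fin m, if p < q then z q - z p else 1

open Finset in
lemma pd_eq {m : ℕ} (z : Fin m → ℝ) :
    pd z = ∏ p : Fin m, ∏ q ∈ Ioi p, (z q - z p) := by
  unfold pd
  refine Finset.prod_congr rfl fun p _ => ?_
  rw [show Ioi p = univ.filter (p < ·) from by ext q; simp, Finset.prod_filter]

lemma pd_pos_of_strictMono {m : ℕ} {z : Fin m → ℝ} (hz : StrictMono z) : 0 < pd z := by
  rw [pd_eq]
  refine Finset.prod_pos fun p _ => Finset.prod_pos fun q hq => ?_
  exact sub_pos.2 (hz (Finset.mem_Ioi.mp hq))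

lemma pd_cast {m m' : ℕ} (h : m' = m) (z : Fin m → ℝ) : pd (z ∘ Fin.cast h) = pd z := by
  subst h; rfl

open Finset in
lemma phi_mul_pd_pos {m : ℕ} {ω : Fin m → ℝ → ℝ} {H : Set ℝ}
    (hω : IsPosChebyshev ω H) {z : Fin m → ℝ} (hz : ∀ i, z i ∈ H)
    (hinj : Function.Injective z) : 0 < Phi ω z * pd z := by
  set σ := Tuple.sort z with hσ
  have hmono : StrictMono (z ∘ σ) :=
    (Tuple.monotone_sort z).strictMono_of_injective (hinj.comp σ.injective)
  have h1 : 0 < Phi ω (z ∘ σ) := hω _ (fun i => hz _) hmono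
  have h2 : 0 < pd (z ∘ σ) := pd_pos_of_strictMono hmono
  set ε : ℝ := ((Equiv.Perm.sign σ : ℤ) : ℝ) with hε
  have hε2 : ε * ε = 1 := by
    rcases Int.units_eq_one_or σ.sign with h | h <;> simp [hε, h]
  have e1 : Phi ω (z ∘ σ) = ε * Phi ω z := by
    have hM : (Matrix.of fun i j => ω i ((z ∘ σ) j)) =
        (Matrix.of fun i j => ω i (z j)).submatrix id σ := rfl
    rw [Phi, hM, Matrix.det_permute']
    norm_num [Phi, hε]
  have e2 : pd (z ∘ σ) = ε * pd z := by
    have v1 := Matrix.det_vandermonde (z ∘ σ)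
    have v2 := Matrix.det_vandermonde z
    have hM : Matrix.vandermonde (z ∘ σ) = (Matrix.vandermonde z).submatrix σ id := rfl
    rw [hM, Matrix.det_permute, v2] at v1
    rw [pd_eq, pd_eq, v1]
  have := mul_pos h1 h2
  rw [e1, e2] at this
  calc (0:ℝ) < ε * Phi ω z * (ε * pd z) := this
    _ = (ε * ε) * (Phi ω z * pd z) := by ring
    _ = Phi ω z * pd z := by rw [hε2, one_mul]

open Matrix in
lemma bordered_det {k : ℕ} (ωf : Fin k → ℝ → ℝ) (g : ℝ → ℝ) (x : Fin k → ℝ) (c : ℝ)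
    [Invertible (Matrix.of fun i j => ωf i (x j))] :
    Phi (Fin.snoc ωf g) (Fin.snoc x c) =
      (Matrix.of fun i j => ωf i (x j)).det *
        (g c - ∑ q, (∑ p, g (x p) * (Matrix.of fun i j => ωf i (x j))⁻¹ p q) * ωf q c) := by
  set B : Matrix (Fin k) (Fin k) ℝ := Matrix.of fun i j => ωf i (x j) with hB
  set Cc : Matrix (Fin k) (Fin 1) ℝ := Matrix.of fun i _ => ωf i c with hCc
  set Rr : Matrix (Fin 1) (Fin k) ℝ := Matrix.of fun _ j => g (x j) with hRr
  set Dd : Matrix (Fin 1) (Fin 1) ℝ := Matrix.of fun _ _ => g c with hDd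
  have hM : (Matrix.of fun i j => (Fin.snoc ωf g : Fin (k+1) → ℝ → ℝ) i ((Fin.snoc x c : Fin (k+1) → ℝ) j)) =
      (Matrix.fromBlocks B Cc Rr Dd).submatrix finSumFinEquiv.symm finSumFinEquiv.symm := by
    ext i j
    refine Fin.lastCases ?_ (fun i' => ?_) i <;> refine Fin.lastCases ?_ (fun j' => ?_) j
    · have h1 : finSumFinEquiv.symm (Fin.last k) = Sum.inr 0 := by
        rw [show Fin.last k = Fin.natAdd k 0 from by ext; simp]
        exact finSumFinEquiv_symm_apply_natAdd 0
      simp [Matrix.submatrix_apply, h1, Fin.snoc_last, hB, hCc, hRr, hDd]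
    · have h1 : finSumFinEquiv.symm (Fin.last k) = Sum.inr 0 := by
        rw [show Fin.last k = Fin.natAdd k 0 from by ext; simp]
        exact finSumFinEquiv_symm_apply_natAdd 0
      have h2 : finSumFinEquiv.symm (Fin.castSucc j') = Sum.inl j' := by
        rw [show Fin.castSucc j' = Fin.castAdd 1 j' from rfl]
        exact finSumFinEquiv_symm_apply_castAdd j'
      simp [Matrix.submatrix_apply, h1, h2, Fin.snoc_last, Fin.snoc_castSucc, hB, hCc, hRr, hDd]
    · have h1 : finSumFinEquiv.symm (Fin.last k) = Sum.inr 0 := by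
        rw [show Fin.last k = Fin.natAdd k 0 from by ext; simp]
        exact finSumFinEquiv_symm_apply_natAdd 0
      have h2 : finSumFinEquiv.symm (Fin.castSucc i') = Sum.inl i' := by
        rw [show Fin.castSucc i' = Fin.castAdd 1 i' from rfl]
        exact finSumFinEquiv_symm_apply_castAdd i'
      simp [Matrix.submatrix_apply, h1, h2, Fin.snoc_last, Fin.snoc_castSucc, hB, hCc, hRr, hDd]
    · have h2 : finSumFinEquiv.symm (Fin.castSucc i') = Sum.inl i' := by
        rw [show Fin.castSucc i' = Fin.castAdd 1 i' from rfl]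
        exact finSumFinEquiv_symm_apply_castAdd i'
      have h3 : finSumFinEquiv.symm (Fin.castSucc j') = Sum.inl j' := by
        rw [show Fin.castSucc j' = Fin.castAdd 1 j' from rfl]
        exact finSumFinEquiv_symm_apply_castAdd j'
      simp [Matrix.submatrix_apply, h2, h3, Fin.snoc_castSucc, hB, hCc, hRr, hDd]
  rw [Phi, hM, Matrix.det_submatrix_equiv_self, Matrix.det_fromBlocks₁₁,
    invOf_eq_nonsing_inv]
  congr 1
  rw [Matrix.det_fin_one]
  simp only [Matrix.sub_apply, Matrix.mul_apply, hDd, hRr, hCc, Matrix.of_apply]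

open Finset in
lemma pd_append {k N : ℕ} (x : Fin k → ℝ) (y : Fin N → ℝ) (w : Fin (k + N) → ℝ)
    (hw1 : ∀ i : Fin k, w (Fin.castAdd N i) = x i)
    (hw2 : ∀ l : Fin N, w (Fin.natAdd k l) = y l) :
    pd w = pd x * pd y * ∏ i, ∏ l, (y l - x i) := by
  unfold pd
  rw [Fin.prod_univ_add]
  have inner1 : ∀ i : Fin k,
      (∏ q : Fin (k + N), if Fin.castAdd N i < q then w q - w (Fin.castAdd N i) else 1)
        = (∏ j : Fin k, if i < j then x j - x i else 1) * ∏ l : Fin N, (y l - x i) := by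
    intro i
    rw [Fin.prod_univ_add]
    congr 1
    · refine Finset.prod_congr rfl fun j _ => ?_
      rw [hw1, hw1]
      by_cases h : i < j
      · rw [if_pos h, if_pos (by simp only [Fin.lt_def, Fin.coe_castAdd] at h ⊢; omega)]
      · rw [if_neg h, if_neg (by simp only [Fin.lt_def, Fin.coe_castAdd] at h ⊢; omega)]
    · refine Finset.prod_congr rfl fun l _ => ?_
      rw [hw1, hw2, if_pos (by simp [Fin.lt_def]; omega)]
  have inner2 : ∀ l : Fin N,
      (∏ q : Fin (k + N), if Fin.natAdd k l < q then w q - w (Fin.natAdd k l) else 1)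
        = ∏ m : Fin N, if l < m then y m - y l else 1 := by
    intro l
    rw [Fin.prod_univ_add]
    have : (∏ j : Fin k, if Fin.natAdd k l < Fin.castAdd N j then w (Fin.castAdd N j) - w (Fin.natAdd k l) else 1) = 1 := by
      refine Finset.prod_eq_one fun j _ => ?_
      rw [if_neg (by simp [Fin.lt_def]; omega)]
    rw [this, one_mul]
    refine Finset.prod_congr rfl fun m _ => ?_
    rw [hw2, hw2]
    by_cases h : l < m
    · rw [if_pos h, if_pos (by simp only [Fin.lt_def, Fin.coe_natAdd] at h ⊢; omega)]
    · rw [if_neg h, if_neg (by simp only [Fin.lt_def, Fin.coe_natAdd] at h ⊢; omega)]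
  rw [Finset.prod_congr rfl fun i _ => inner1 i, Finset.prod_congr rfl fun l _ => inner2 l,
    Finset.prod_mul_distrib]
  ring

lemma pd_snoc {k : ℕ} (x : Fin k → ℝ) (c : ℝ) :
    pd (Fin.snoc x c) = pd x * ∏ i, (c - x i) := by
  have h := pd_append x (fun _ : Fin 1 => c) (Fin.snoc x c)
    (fun i => by rw [show Fin.castAdd 1 i = Fin.castSucc i from rfl, Fin.snoc_castSucc])
    (fun l => by rw [show Fin.natAdd k l = Fin.last k from by ext; simp [Fin.eq_zero l], Fin.snoc_last])
  rw [h]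
  have : pd (fun _ : Fin 1 => c) = 1 := by simp [pd]
  rw [this, mul_one]
  congr 1
  exact Finset.prod_congr rfl fun i _ => by rw [Fin.prod_univ_one]

/-- Theorem 1. If `ω` is an `n`-dimensional positive Chebyshev system over `H` (with `|H| ≥ n`)
such that `ω⟨k⟩` and `ω⟨k+1⟩` are positive Chebyshev systems, and `x₁ < … < x_k` are in `H`,
then the system `x ↦ [x₁,…,x_k,x; ω_j]_{ω⟨k+1⟩}` (`k+1 ≤ j ≤ n`) is an `(n-k)`-dimensional
positive Chebyshev system over `H \ {x₁,…,x_k}`. -/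
theorem divided_difference_system_is_chebyshev (n k : ℕ) (hk : k < n) (H : Set ℝ)
    (hH : n ≤ H.ncard ∨ H.Infinite)
    (ω : Fin n → ℝ → ℝ)
    (hω : IsPosChebyshev ω H)
    (hωk : IsPosChebyshev (fun i : Fin k => ω (Fin.castLE (by omega) i)) H)
    (hωk1 : IsPosChebyshev (fun i : Fin (k + 1) => ω (Fin.castLE hk i)) H)
    (x : Fin k → ℝ) (hxH : ∀ i, x i ∈ H) (hx : StrictMono x) :
    IsPosChebyshev
      (fun j : Fin (n - k) => fun y : ℝ =>
        divDiff (fun i : Fin (k + 1) => ω (Fin.castLE hk i))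
          (ω ⟨k + (j : ℕ), by have := j.isLt; omega⟩) (Fin.snoc x y))
      (H \ Set.range x) := by
  intro ys hys hysm
  have hkn : k + (n - k) = n := by omega
  set e : Fin n ≃ Fin k ⊕ Fin (n - k) := (finSumFinEquiv.trans (finCongr hkn)).symm with hedef
  set fk : Fin k → Fin n := fun i => ⟨i, by omega⟩ with hfkdef
  set fN : Fin (n - k) → Fin n := fun l => ⟨k + l, by omega⟩ with hfNdef
  have hes1 : ∀ i : Fin k, e.symm (Sum.inl i) = fk i := by
    intro i; ext
    simp [hedef, hfkdef]
  have hes2 : ∀ l : Fin (n - k), e.symm (Sum.inr l) = fN l := by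
    intro l; ext
    simp [hedef, hfNdef]
  -- matrices
  set B : Matrix (Fin k) (Fin k) ℝ := Matrix.of fun i j => ω (fk i) (x j) with hBdef
  set Cm : Matrix (Fin k) (Fin (n - k)) ℝ := Matrix.of fun i l => ω (fk i) (ys l) with hCmdef
  set R : Matrix (Fin (n - k)) (Fin k) ℝ := Matrix.of fun j i => ω (fN j) (x i) with hRdef
  set D : Matrix (Fin (n - k)) (Fin (n - k)) ℝ := Matrix.of fun j l => ω (fN j) (ys l) with hDdef
  have hBpos : 0 < B.det := hωk x hxH hx
  haveI : Invertible B := B.invertibleOfIsUnitDet (isUnit_iff_ne_zero.mpr hBpos.ne')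
  set S : Matrix (Fin (n - k)) (Fin (n - k)) ℝ := D - R * B⁻¹ * Cm with hSdef
  set A : Matrix (Fin k ⊕ Fin (n - k)) (Fin k ⊕ Fin (n - k)) ℝ := Matrix.fromBlocks B Cm R D with hAdef
  have hdetA : A.det = B.det * S.det := by
    rw [hAdef, Matrix.det_fromBlocks₁₁, Matrix.invOf_eq_nonsing_inv, hSdef]
  -- the merged point vector
  set w : Fin n → ℝ := fun j => Sum.elim x ys (e j) with hwdef
  have hw1 : ∀ i : Fin k, w (fk i) = x i := by
    intro i
    rw [hwdef]
    simp only [← hes1 i, Equiv.apply_symm_apply, Sum.elim_inl]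
  have hw2 : ∀ l : Fin (n - k), w (fN l) = ys l := by
    intro l
    rw [hwdef]
    simp only [← hes2 l, Equiv.apply_symm_apply, Sum.elim_inr]
  have hPhiA : Phi ω w = A.det := by
    rw [Phi, ← Matrix.det_submatrix_equiv_self e A]
    congr 1
    ext i j
    have hii : i = e.symm (e i) := (Equiv.symm_apply_apply e i).symm
    have hjj : j = e.symm (e j) := (Equiv.symm_apply_apply e j).symm
    rcases hi : e i with i' | i' <;> rcases hj : e j with j' | j'
    · rw [Matrix.submatrix_apply, hi, hj, hAdef]
      rw [hi, hes1 i'] at hii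
      rw [hj, hes1 j'] at hjj
      simp [hwdef, hj, hii, hBdef]
    · rw [Matrix.submatrix_apply, hi, hj, hAdef]
      rw [hi, hes1 i'] at hii
      simp [hwdef, hj, hii, hCmdef]
    · rw [Matrix.submatrix_apply, hi, hj, hAdef]
      rw [hi, hes2 i'] at hii
      simp [hwdef, hj, hii, hRdef]
    · rw [Matrix.submatrix_apply, hi, hj, hAdef]
      rw [hi, hes2 i'] at hii
      simp [hwdef, hj, hii, hDdef]
  -- injectivity and membership
  have hyx : ∀ l i, ys l ≠ x i := fun l i h => (hys l).2 ⟨i, h.symm⟩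
  have helim : Function.Injective (Sum.elim x ys) := by
    rintro (a | a) (b | b) h
    · exact congrArg Sum.inl (hx.injective h)
    · exact absurd h.symm (hyx b a)
    · exact absurd h (hyx a b)
    · exact congrArg Sum.inr (hysm.injective h)
  have hwinj : Function.Injective w := helim.comp e.injective
  have hwH : ∀ j, w j ∈ H := by
    intro j
    rw [hwdef]
    rcases h : e j with a | a
    · simp only [h, Sum.elim_inl]; exact hxH a
    · simp only [h, Sum.elim_inr]; exact (hys a).1
  have hA : 0 < A.det * pd w := by
    have := phi_mul_pd_pos hω hwH hwinj
    rwa [hPhiA] at this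
  -- pd splitting
  set Cross : ℝ := ∏ i, ∏ l, (ys l - x i) with hCrossdef
  have hpdw : pd w = pd x * pd ys * Cross := by
    rw [← pd_cast hkn w]
    exact pd_append x ys (w ∘ Fin.cast hkn)
      (fun i => by
        show w (Fin.cast hkn (Fin.castAdd (n - k) i)) = x i
        rw [show Fin.cast hkn (Fin.castAdd (n - k) i) = fk i from by ext; simp [hfkdef], hw1])
      (fun l => by
        show w (Fin.cast hkn (Fin.natAdd k l)) = ys l
        rw [show Fin.cast hkn (Fin.natAdd k l) = fN l from by ext; simp [hfNdef], hw2])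
  -- denominators
  set den : Fin (n - k) → ℝ := fun l => Phi (fun i : Fin (k+1) => ω (Fin.castLE hk i)) (Fin.snoc x (ys l)) with hdendef
  have hsnocH : ∀ l (i : Fin (k+1)), (Fin.snoc x (ys l) : Fin (k+1) → ℝ) i ∈ H := by
    intro l i
    refine Fin.lastCases ?_ (fun i' => ?_) i
    · rw [Fin.snoc_last]; exact (hys l).1
    · rw [Fin.snoc_castSucc]; exact hxH i'
  have hsnocinj : ∀ l, Function.Injective (Fin.snoc x (ys l) : Fin (k+1) → ℝ) := by
    intro l a b hab
    rcases Fin.eq_castSucc_or_eq_last a with ⟨a', rfl⟩ | rfl <;>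
      rcases Fin.eq_castSucc_or_eq_last b with ⟨b', rfl⟩ | rfl
    · rw [Fin.snoc_castSucc, Fin.snoc_castSucc] at hab
      exact congrArg _ (hx.injective hab)
    · rw [Fin.snoc_castSucc, Fin.snoc_last] at hab
      exact absurd hab.symm (hyx l a')
    · rw [Fin.snoc_last, Fin.snoc_castSucc] at hab
      exact absurd hab (hyx l b')
    · rfl
  have hden : ∀ l, 0 < den l * (pd x * ∏ i, (ys l - x i)) := by
    intro l
    have := phi_mul_pd_pos hωk1 (hsnocH l) (hsnocinj l)
    rwa [pd_snoc] at this
  have hdenne : ∀ l, den l ≠ 0 := by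
    intro l h
    have := hden l
    rw [h, zero_mul] at this
    exact lt_irrefl 0 this
  have hPne : (∏ l, den l) ≠ 0 := Finset.prod_ne_zero_iff.mpr fun l _ => hdenne l
  -- numerators via bordered determinants
  have htuple : ∀ jj : Fin (n - k),
      (fun i : Fin (k+1) => if (i : ℕ) + 1 = k + 1 then ω (fN jj) else ω (Fin.castLE hk i))
        = Fin.snoc (fun i : Fin k => ω (fk i)) (ω (fN jj)) := by
    intro jj; funext i
    refine Fin.lastCases ?_ (fun i' => ?_) i
    · rw [Fin.snoc_last, if_pos (by simp)]
    · rw [Fin.snoc_castSucc, if_neg (by have := i'.isLt; simp only [Fin.coe_castSucc]; omega)]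
      congr 1
  have hnum : ∀ (jj : Fin (n - k)) (l : Fin (n - k)),
      Phi (fun i : Fin (k+1) => if (i : ℕ) + 1 = k + 1 then ω (fN jj) else ω (Fin.castLE hk i))
          (Fin.snoc x (ys l)) = B.det * S jj l := by
    intro jj l
    rw [htuple jj, bordered_det (fun i : Fin k => ω (fk i)) (ω (fN jj)) x (ys l)]
    congr 1
  -- rewrite the goal determinant
  show 0 < Matrix.det (Matrix.of fun (jj l : Fin (n - k)) =>
    divDiff (fun i : Fin (k + 1) => ω (Fin.castLE hk i))
      (ω ⟨k + (jj : ℕ), by have := jj.isLt; omega⟩) (Fin.snoc x (ys l)))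
  have hMeq : (Matrix.of fun (jj l : Fin (n - k)) =>
      divDiff (fun i : Fin (k + 1) => ω (Fin.castLE hk i))
        (ω ⟨k + (jj : ℕ), by have := jj.isLt; omega⟩) (Fin.snoc x (ys l)))
      = Matrix.of fun (jj l : Fin (n - k)) => (fun l => (den l)⁻¹) l * (B.det • S) jj l := by
    ext jj l
    show divDiff (fun i : Fin (k + 1) => ω (Fin.castLE hk i)) (ω (fN jj)) (Fin.snoc x (ys l)) = _
    simp only [divDiff]
    rw [hnum jj l, show Phi (fun i : Fin (k+1) => ω (Fin.castLE hk i)) (Fin.snoc x (ys l)) = den l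
      from (congrFun hdendef l).symm]
    simp only [Matrix.of_apply, Matrix.smul_apply, smul_eq_mul]
    rw [div_eq_mul_inv]
    ring
  rw [hMeq, Matrix.det_mul_row, Matrix.det_smul, Finset.prod_inv_distrib, Fintype.card_fin]
  -- final positivity bookkeeping
  have hpdx : 0 < pd x := pd_pos_of_strictMono hx
  have hpdy : 0 < pd ys := pd_pos_of_strictMono hysm
  have hCrossne : Cross ≠ 0 := by
    rw [hCrossdef]
    exact Finset.prod_ne_zero_iff.mpr fun i _ =>
      Finset.prod_ne_zero_iff.mpr fun l _ => sub_ne_zero.mpr (hyx l i)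
  have hAne : A.det ≠ 0 := by
    intro h
    rw [h, zero_mul] at hA
    exact lt_irrefl 0 hA
  have hSne : S.det ≠ 0 := by
    intro h
    rw [hdetA, h, mul_zero] at hAne
    exact hAne rfl
  have h0 : 0 < ∏ l, (den l * (pd x * ∏ i, (ys l - x i))) := Finset.prod_pos fun l _ => hden l
  have hprodsplit : (∏ l, (den l * (pd x * ∏ i, (ys l - x i))))
      = (∏ l, den l) * (pd x ^ (n - k) * Cross) := by
    rw [Finset.prod_mul_distrib, Finset.prod_mul_distrib, Finset.prod_const, Finset.card_univ,
      Fintype.card_fin, hCrossdef, Finset.prod_comm]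
  rw [hprodsplit] at h0
  have hQ : 0 < ((∏ l, den l) * (pd x ^ (n - k) * Cross)) * (A.det * pd w) := mul_pos h0 hA
  have main : ((∏ l, den l)⁻¹ * (B.det ^ (n - k) * S.det)) *
      (((∏ l, den l) * (pd x ^ (n - k) * Cross)) * (A.det * pd w))
      = B.det ^ ((n - k) + 1) * pd x ^ ((n - k) + 1) * pd ys * (S.det * Cross) ^ 2 := by
    rw [hdetA, hpdw]
    field_simp
    ring
  have hRHS : 0 < B.det ^ ((n - k) + 1) * pd x ^ ((n - k) + 1) * pd ys * (S.det * Cross) ^ 2 := by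
    have h2 : 0 < (S.det * Cross) ^ 2 :=
      pow_two_pos_of_ne_zero (mul_ne_zero hSne hCrossne)
    have := mul_pos (mul_pos (mul_pos (pow_pos hBpos ((n - k)+1)) (pow_pos hpdx ((n - k)+1))) hpdy) h2
    exact this
  have hTQ : 0 < ((∏ l, den l)⁻¹ * (B.det ^ (n - k) * S.det)) *
      (((∏ l, den l) * (pd x ^ (n - k) * Cross)) * (A.det * pd w)) := by
    rw [main]; exact hRHS
  rcases mul_pos_iff.mp hTQ with ⟨h1, _⟩ | ⟨_, h2⟩
  · exact h1
  · linarith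
end

section
/- Let n, k ∈ ℕ with k < n, let H ⊆ ℝ with |H| ≥ n+1, and let f : H → ℝ. Then f is n-monotone (i.e., convex with respect to the polynomial Chebyshev system (1, x, …, x^{n−1})) if and only if for each k-tuple x₁ < … < x_k in H, the function x ↦ [x₁, …, x_k, x; f] (classical divided difference) is (n−k)-monotone (i.e., convex with respect to (1, x, …, x^{n−k−1})) on H ∖ {x₁, …, x_k}. -/
open Polynomial Finset

namespace Lagrange

variable {F ι : Type*} [Field F] {s t : Finset ι} {v : ι → F}

theorem nodal_dvd_of_eval_eq_zero (hvs : Set.InjOn v s) {Q : F[X]}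
    (hQ : ∀ i ∈ s, Q.eval (v i) = 0) : nodal s v ∣ Q := by
  rw [nodal_eq]
  refine prod_dvd_of_coprime (fun i hi j hj hij => ?_) fun i hi => dvd_iff_isRoot.mpr (hQ i hi)
  exact isCoprime_X_sub_C_of_isUnit_sub (sub_ne_zero_of_ne (hvs.ne hi hj hij)).isUnit

theorem exists_interpolate_eq_add_nodal_mul [DecidableEq ι] {m : ℕ} (hst : s ⊆ t)
    (hvt : Set.InjOn v t) (ht : #t = #s + m + 1) (r : ι → F) :
    ∃ R : F[X], R.natDegree ≤ m ∧ interpolate t v r = interpolate s v r + nodal s v * R := by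
  have hvs := hvt.mono hst
  obtain ⟨R, hR⟩ : nodal s v ∣ interpolate t v r - interpolate s v r := by
    refine nodal_dvd_of_eval_eq_zero hvs fun i hi => ?_
    rw [eval_sub, eval_interpolate_at_node r hvt (hst hi), eval_interpolate_at_node r hvs hi,
      sub_self]
  refine ⟨R, ?_, by rw [← hR]; ring⟩
  rcases eq_or_ne R 0 with rfl | hR0
  · simp
  have hdeg : (interpolate t v r - interpolate s v r).degree < ↑(#s + m + 1) := by
    refine (degree_sub_le _ _).trans_lt (max_lt ?_ ?_)
    · simpa [ht] using degree_interpolate_lt r hvt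
    · exact (degree_interpolate_lt r hvs).trans_le (by exact_mod_cast (by omega))
  rw [hR, degree_eq_natDegree (mul_ne_zero nodal_ne_zero hR0), nodal_monic.natDegree_mul' hR0,
    natDegree_nodal] at hdeg
  have : #s + R.natDegree < #s + m + 1 := by exact_mod_cast hdeg
  omega

theorem coeff_add_nodal_mul {L R : F[X]} {m : ℕ} (hL : L.degree < #s) (hR : R.natDegree ≤ m) :
    (L + nodal s v * R).coeff (#s + m) = R.coeff m := by
  rw [coeff_add, coeff_eq_zero_of_degree_lt (hL.trans_le (by exact_mod_cast (by omega))),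
    zero_add, coeff_mul_add_eq_of_natDegree_le natDegree_nodal.le hR, ← natDegree_nodal (v := v),
    ← leadingCoeff, nodal_monic.leadingCoeff, one_mul]

theorem coeff_interpolate_insert_mul_eval_nodal [DecidableEq ι] {i : ι} (hi : i ∉ s)
    (hv : Set.InjOn v (insert i s : Finset ι)) (r : ι → F) :
    (interpolate (insert i s) v r).coeff #s * (nodal s v).eval (v i)
      = r i - (interpolate s v r).eval (v i) := by
  obtain ⟨R, hR, hT⟩ := exists_interpolate_eq_add_nodal_mul (m := 0) (subset_insert i s) hv
    (card_insert_of_notMem hi) r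
  have hcoeff : (interpolate (insert i s) v r).coeff #s = R.eval (v i) := by
    rw [hT, ← add_zero #s,
      coeff_add_nodal_mul (degree_interpolate_lt r (hv.mono (subset_insert i s))) hR,
      eq_C_of_natDegree_le_zero hR, coeff_C_zero, eval_C]
  rw [hcoeff, ← eval_interpolate_at_node r hv (mem_insert_self i s), hT, eval_add, eval_mul]
  ring

theorem coeff_interpolate_coeff_interpolate_insert [DecidableEq ι] {m : ℕ} (hst : Disjoint s t)
    (hv : Set.InjOn v (s ∪ t : Finset ι)) (ht : #t = m + 1) (r : ι → F) :
    (interpolate t v fun j => (interpolate (insert j s) v r).coeff #s).coeff m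
      = (interpolate (s ∪ t) v r).coeff (#s + m) := by
  obtain ⟨R, hR, hP⟩ := exists_interpolate_eq_add_nodal_mul subset_union_left hv
    (by rw [card_union_of_disjoint hst, ht, add_assoc]) r
  have hRt : R = interpolate t v fun j => (interpolate (insert j s) v r).coeff #s := by
    refine eq_interpolate_of_eval_eq _ (hv.mono subset_union_right)
      (by rw [ht]; exact (degree_le_of_natDegree_le hR).trans_lt (by exact_mod_cast m.lt_succ_self))
      fun j hj => ?_
    have hjs : j ∉ s := disjoint_right.mp hst hj
    have hnodal : (nodal s v).eval (v j) ≠ 0 := eval_nodal_not_at_node fun i hi =>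
      hv.ne (mem_union_right s hj) (mem_union_left t hi) (ne_of_mem_of_not_mem hi hjs).symm
    have hnewton := coeff_interpolate_insert_mul_eval_nodal hjs
      (hv.mono (insert_subset (mem_union_right s hj) subset_union_left)) r
    rw [← eval_interpolate_at_node r hv (mem_union_right s hj), hP, eval_add, eval_mul,
      add_sub_cancel_left, mul_comm] at hnewton
    exact mul_left_cancel₀ hnodal hnewton.symm
  rw [← hRt, hP, coeff_add_nodal_mul (degree_interpolate_lt r (hv.mono subset_union_left)) hR]

theorem interpolate_comp_eq_interpolate_image [DecidableEq ι] [DecidableEq F]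
    (hvs : Set.InjOn v s) (r : F → F) : interpolate s v (r ∘ v) = interpolate (s.image v) id r := by
  refine eq_interpolate_of_eval_eq _ (Set.injOn_id _) ?_ fun x hx => ?_
  · rw [card_image_of_injOn hvs]
    exact degree_interpolate_lt _ hvs
  · obtain ⟨i, hi, rfl⟩ := mem_image.mp hx
    exact eval_interpolate_at_node _ hvs hi

end Lagrange

open Lagrange

local notation "monomials " m => fun i : Fin m => fun t : ℝ => t ^ (i : ℕ)

theorem Phi_monomials_eq_det_vandermonde {m : ℕ} (z : Fin m → ℝ) :
    Phi (monomials m) z = (Matrix.vandermonde z).det := by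
  rw [Phi, ← Matrix.det_transpose]
  rfl

theorem Phi_monomials_pos {m : ℕ} {z : Fin m → ℝ} (hz : StrictMono z) :
    0 < Phi (monomials m) z := by
  rw [Phi_monomials_eq_det_vandermonde, Matrix.det_vandermonde]
  exact prod_pos fun i _ => prod_pos fun j hj => sub_pos.mpr (hz (mem_Ioi.mp hj))

theorem Phi_monomials_ne_zero {m : ℕ} {z : Fin m → ℝ} (hz : Function.Injective z) :
    Phi (monomials m) z ≠ 0 := by
  rw [Phi_monomials_eq_det_vandermonde]
  exact Matrix.det_vandermonde_ne_zero_iff.mpr hz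

theorem Phi_snoc_monomials {m : ℕ} (f : ℝ → ℝ) {z : Fin (m + 1) → ℝ}
    (hz : Function.Injective z) :
    Phi (Fin.snoc (monomials m) f) z
      = (interpolate univ z (f ∘ z)).coeff m * Phi (monomials (m + 1)) z := by
  set P := interpolate univ z (f ∘ z)
  set p : Fin (m + 1) → ℝ[X] := Fin.snoc (fun i : Fin m => X ^ (i : ℕ)) P
  have hdeg : ∀ i, (p i).natDegree ≤ i := by
    refine Fin.lastCases ?_ fun i => ?_
    · have hP := degree_interpolate_lt (s := univ) (f ∘ z) hz.injOn
      rw [card_univ, Fintype.card_fin] at hP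
      simpa [p, natDegree_le_iff_degree_le] using Order.le_of_lt_succ hP
    · simp [p]
  have hmat : Matrix.of (fun i j => Fin.snoc (α := fun _ => ℝ → ℝ) (monomials m) f i (z j))
      = (Matrix.of fun i j => (p j).eval (z i)).transpose := by
    ext i j
    refine Fin.lastCases ?_ (fun i => ?_) i
    · simp only [p, Matrix.of_apply, Matrix.transpose_apply, Fin.snoc_last]
      exact (eval_interpolate_at_node (f ∘ z) hz.injOn (mem_univ j)).symm
    · simp [p]
  rw [Phi, hmat, Matrix.det_transpose,
    Matrix.eval_matrixOfPolynomials_eq_vandermonde_mul_matrixOfPolynomials z p hdeg, Matrix.det_mul,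
    Matrix.det_of_isUpperTriangular (Matrix.matrixOfPolynomials_blockTriangular p hdeg),
    Fin.prod_univ_castSucc, Phi_monomials_eq_det_vandermonde, mul_comm]
  simp [p]

theorem isConvexWRT_monomials_iff {m : ℕ} {S : Set ℝ} {f : ℝ → ℝ} :
    IsConvexWRT (monomials m) S f ↔
      ∀ s : Finset ℝ, ↑s ⊆ S → #s = m + 1 → 0 ≤ (interpolate s id f).coeff m := by
  have hsign : ∀ z : Fin (m + 1) → ℝ, StrictMono z → (0 ≤ Phi (Fin.snoc (monomials m) f) z ↔
      0 ≤ (interpolate (univ.image z) id f).coeff m) := fun z hz => by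
    rw [Phi_snoc_monomials f hz.injective, mul_nonneg_iff_of_pos_right (Phi_monomials_pos hz),
      interpolate_comp_eq_interpolate_image hz.injective.injOn]
  constructor
  · intro hf s hsS hs
    have hz := (s.orderEmbOfFin hs).strictMono
    have := (hsign _ hz).mp (hf _ (fun i => hsS (s.orderEmbOfFin_mem hs i)) hz)
    rwa [image_orderEmbOfFin_univ] at this
  · intro hf z hzS hz
    refine (hsign z hz).mpr (hf _ ?_ ?_)
    · simpa [Set.range_subset_iff] using hzS
    · rw [card_image_of_injective _ hz.injective, card_univ, Fintype.card_fin]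

theorem divDiff_monomials {k : ℕ} (f : ℝ → ℝ) {p : Fin (k + 1) → ℝ} (hp : Function.Injective p) :
    divDiff (monomials (k + 1)) f p = (interpolate univ p (f ∘ p)).coeff k := by
  have hnum : (fun i : Fin (k + 1) => if (i : ℕ) + 1 = k + 1 then f else fun t : ℝ => t ^ (i : ℕ))
      = Fin.snoc (monomials k) f := by
    funext i
    refine Fin.lastCases ?_ (fun i => ?_) i
    · simp
    · simp [i.isLt.ne]
  rw [divDiff, hnum, Phi_snoc_monomials f hp, mul_div_cancel_right₀ _ (Phi_monomials_ne_zero hp)]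

theorem divDiff_monomials_snoc {k : ℕ} (f : ℝ → ℝ) {x : Fin k → ℝ} (hx : Function.Injective x)
    {y : ℝ} (hy : y ∉ Set.range x) :
    divDiff (monomials (k + 1)) f (Fin.snoc x y)
      = (interpolate (insert y (univ.image x)) id f).coeff #(univ.image x) := by
  have hp := Fin.snoc_injective_of_injective hx hy
  have himage : univ.image (Fin.snoc x y : Fin (k + 1) → ℝ) = insert y (univ.image x) := by
    rw [← coe_inj]
    simp [Fin.range_snoc]
  rw [divDiff_monomials f hp, interpolate_comp_eq_interpolate_image hp.injOn, himage,
    card_image_of_injective _ hx, card_univ, Fintype.card_fin]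

theorem coeff_interpolate_divDiff_monomials_snoc {k m : ℕ} (f : ℝ → ℝ) {x : Fin k → ℝ}
    (hx : Function.Injective x) {t : Finset ℝ} (hxt : Disjoint (univ.image x) t) (ht : #t = m + 1) :
    (interpolate t id fun y => divDiff (monomials (k + 1)) f (Fin.snoc x y)).coeff m
      = (interpolate (univ.image x ∪ t) id f).coeff (k + m) := by
  have hk : #(univ.image x) = k := by rw [card_image_of_injective _ hx, card_univ, Fintype.card_fin]
  have hvalues : interpolate t id (fun y => divDiff (monomials (k + 1)) f (Fin.snoc x y))
      = interpolate t id fun y =>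
          (interpolate (insert y (univ.image x)) id f).coeff #(univ.image x) :=
    interpolate_eq_of_values_eq_on _ _ fun y hy => divDiff_monomials_snoc f hx fun ⟨i, hi⟩ =>
      disjoint_left.mp hxt (mem_image_of_mem x (mem_univ i)) (hi ▸ hy)
  rw [hvalues, coeff_interpolate_coeff_interpolate_insert hxt (Set.injOn_id _) ht f, hk]

theorem n_monotone_iff_divided_difference_monotone_general (n k : ℕ) (hk : k < n) (H : Set ℝ)
    (f : ℝ → ℝ) :
    IsConvexWRT (fun i : Fin n => fun t : ℝ => t ^ (i : ℕ)) H f ↔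
      ∀ x : Fin k → ℝ, (∀ i, x i ∈ H) → StrictMono x →
        IsConvexWRT (fun i : Fin (n - k) => fun t : ℝ => t ^ (i : ℕ)) (H \ Set.range x)
          (fun y : ℝ =>
            divDiff (fun i : Fin (k + 1) => fun t : ℝ => t ^ (i : ℕ)) f (Fin.snoc x y)) := by
  simp only [isConvexWRT_monomials_iff]
  constructor
  · intro hf x hxH hx t htH ht
    have hxt : Disjoint (univ.image x) t := disjoint_left.mpr fun y hy hyt => by
      obtain ⟨i, -, rfl⟩ := mem_image.mp hy
      exact (htH hyt).2 ⟨i, rfl⟩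
    rw [coeff_interpolate_divDiff_monomials_snoc f hx.injective hxt ht, Nat.add_sub_cancel' hk.le]
    refine hf _ ?_ ?_
    · rw [coe_union, coe_image, coe_univ, Set.image_univ]
      exact Set.union_subset (Set.range_subset_iff.mpr hxH) fun y hy => (htH hy).1
    · rw [card_union_of_disjoint hxt, ht, card_image_of_injective _ hx.injective, card_univ,
        Fintype.card_fin]
      omega
  · intro hg s hsH hs
    set x : Fin k → ℝ := fun i => s.orderEmbOfFin hs (Fin.castLE (by omega) i)
    have hx : StrictMono x := (s.orderEmbOfFin hs).strictMono.comp (Fin.strictMono_castLE _)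
    have hxs : univ.image x ⊆ s := image_subset_iff.mpr fun i _ => s.orderEmbOfFin_mem hs _
    have hsub : ↑(s \ univ.image x) ⊆ H \ Set.range x := fun y hy => by
      rw [mem_coe, mem_sdiff] at hy
      exact ⟨hsH hy.1, fun ⟨i, hi⟩ => hy.2 (hi ▸ mem_image_of_mem x (mem_univ i))⟩
    have hcard : #(s \ univ.image x) = n - k + 1 := by
      rw [card_sdiff_of_subset hxs, card_image_of_injective _ hx.injective, card_univ,
        Fintype.card_fin]
      omega
    have := hg x (fun i => hsH (hxs (mem_image_of_mem x (mem_univ i)))) hx _ hsub hcard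
    rwa [coeff_interpolate_divDiff_monomials_snoc f hx.injective disjoint_sdiff hcard,
      union_sdiff_of_subset hxs, Nat.add_sub_cancel' hk.le] at this

/-- Corollary 2, (i) ⇔ (ii): `f` is `n`-monotone (convex with respect to the polynomial
Chebyshev system `(1, x, …, x^{n-1})`) on `H` if and only if for each `x₁ < … < x_k` in `H`,
the classical divided difference function `x ↦ [x₁,…,x_k,x; f]` is `(n-k)`-monotone
(convex with respect to `(1, x, …, x^{n-k-1})`) on `H \ {x₁,…,x_k}`. -/
theorem n_monotone_iff_divided_difference_monotone (n k : ℕ) (hk : k < n) (H : Set ℝ)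
    (hH : n + 1 ≤ H.ncard ∨ H.Infinite) (f : ℝ → ℝ) :
    IsConvexWRT (fun i : Fin n => fun t : ℝ => t ^ (i : ℕ)) H f ↔
      ∀ x : Fin k → ℝ, (∀ i, x i ∈ H) → StrictMono x →
        IsConvexWRT (fun i : Fin (n - k) => fun t : ℝ => t ^ (i : ℕ)) (H \ Set.range x)
          (fun y : ℝ =>
            divDiff (fun i : Fin (k + 1) => fun t : ℝ => t ^ (i : ℕ)) f (Fin.snoc x y)) :=
  n_monotone_iff_divided_difference_monotone_general n k hk H f
end

section
/- Let n, k ∈ ℕ with k < n, let H ⊆ ℝ with |H| ≥ n+1, and let f : H → ℝ. Suppose there exists ℓ ∈ {0, …, k} such that for each k-tuple x₁ < … < x_k in H, the function x ↦ [x₁, …, x_k, x; f] (classical divided difference) is (n−k)-monotone on H ∩ (−∞, x₁) if ℓ = 0, on H ∩ (x_ℓ, x_{ℓ+1}) if 0 < ℓ < k, and on H ∩ (x_k, +∞) if ℓ = k. Then f is n-monotone on H. -/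
/-!
Writing divided differences in their Lagrange form, `Φ_{(1, t, …, t^(m-1), g)}(x₁, …, x_{m+1})`
is the positive Vandermonde determinant times `[x₁, …, x_{m+1}; g]`, so `m`-monotonicity is the
nonnegativity of all `(m+1)`-point divided differences. Given `n + 1` points of `H`, take as
`x₁ < … < x_k` the `ℓ` smallest and the `k - ℓ` largest of them; the `n - k + 1` remaining points
lie in the interval where `y ↦ [x₁, …, x_k, y; f]` is `(n-k)`-monotone, and divided differences
compose: the divided difference of that function over the remaining points is the divided
difference of `f` over all `n + 1` points.
-/

open Finset Polynomial

section DividedDifference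

variable {K : Type*} [Field K] [DecidableEq K]

-- The classical divided difference `[x₁, …, x_m; f]` at the points of `s`, in closed form.
def dividedDifference (f : K → K) (s : Finset K) : K :=
  ∑ a ∈ s, f a / ∏ b ∈ s.erase a, (a - b)

theorem dividedDifference_congr {f g : K → K} {s : Finset K} (h : ∀ a ∈ s, f a = g a) :
    dividedDifference f s = dividedDifference g s :=
  sum_congr rfl fun a ha => by rw [h a ha]

theorem dividedDifference_eq_coeff_interpolate (f : K → K) (s : Finset K) :
    dividedDifference f s = (Lagrange.interpolate s id f).coeff (#s - 1) := by
  rw [Lagrange.coeff_eq_sum (Set.injOn_id _) (Lagrange.degree_interpolate_lt _ (Set.injOn_id _))]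
  exact sum_congr rfl fun a ha => by
    rw [Lagrange.eval_interpolate_at_node _ (Set.injOn_id _) ha]; rfl

theorem dividedDifference_inv_sub {c : K} {t : Finset K} (hc : c ∉ t) (ht : t.Nonempty) :
    dividedDifference (fun a => (c - a)⁻¹) t = (∏ a ∈ t, (c - a))⁻¹ := by
  have h := Lagrange.eval_interpolate_not_at_node (s := t) (v := id) (x := c) 1
    fun a ha h => hc (h ▸ ha)
  rw [Lagrange.interpolate_one (Set.injOn_id _) ht, eval_one, Lagrange.eval_nodal] at h
  simp only [id, Pi.one_apply, mul_one] at h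
  rw [← eq_inv_of_mul_eq_one_right h.symm, dividedDifference]
  refine sum_congr rfl fun a _ => ?_
  rw [Lagrange.nodalWeight, prod_inv_distrib, div_eq_mul_inv, mul_comm]
  rfl

theorem dividedDifference_insert (f : K → K) {a : K} {s : Finset K} (ha : a ∉ s) :
    dividedDifference f (insert a s) =
      f a / ∏ b ∈ s, (a - b) + ∑ c ∈ s, f c / (∏ b ∈ s.erase c, (c - b)) * (c - a)⁻¹ := by
  rw [dividedDifference, sum_insert ha, erase_insert ha]
  congr 1
  refine sum_congr rfl fun c hc => ?_
  have hac : a ∉ s.erase c := fun h => ha (mem_of_mem_erase h)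
  rw [erase_insert_of_ne (ne_of_mem_of_not_mem hc ha).symm, prod_insert hac,
    mul_comm (c - a), ← div_div, div_eq_mul_inv]

theorem dividedDifference_dividedDifference_insert (f : K → K) {s t : Finset K}
    (hst : Disjoint s t) (ht : t.Nonempty) :
    dividedDifference (fun y => dividedDifference f (insert y s)) t =
      dividedDifference f (s ∪ t) := by
  have hts : ∀ a ∈ t, a ∉ s := fun a ha hs => disjoint_left.mp hst hs ha
  have hst' : ∀ c ∈ s, c ∉ t := fun c hc => disjoint_left.mp hst hc
  have prod_t : ∀ a ∈ t, ∏ b ∈ (s ∪ t).erase a, (a - b) =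
      (∏ b ∈ s, (a - b)) * ∏ b ∈ t.erase a, (a - b) := fun a ha => by
    rw [erase_union_distrib, erase_eq_of_notMem (hts a ha),
      prod_union (disjoint_of_subset_right (erase_subset _ _) hst)]
  have prod_s : ∀ c ∈ s, ∏ b ∈ (s ∪ t).erase c, (c - b) =
      (∏ b ∈ s.erase c, (c - b)) * ∏ b ∈ t, (c - b) := fun c hc => by
    rw [erase_union_distrib, erase_eq_of_notMem (hst' c hc),
      prod_union (disjoint_of_subset_left (erase_subset _ _) hst)]
  calc dividedDifference (fun y => dividedDifference f (insert y s)) t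
      = ∑ a ∈ t, (f a / ∏ b ∈ s, (a - b) +
          ∑ c ∈ s, f c / (∏ b ∈ s.erase c, (c - b)) * (c - a)⁻¹) / ∏ b ∈ t.erase a, (a - b) :=
        sum_congr rfl fun a ha => by rw [← dividedDifference_insert f (hts a ha)]
    _ = ∑ a ∈ t, f a / ((∏ b ∈ s, (a - b)) * ∏ b ∈ t.erase a, (a - b)) +
          ∑ c ∈ s, f c / (∏ b ∈ s.erase c, (c - b)) * dividedDifference (fun a => (c - a)⁻¹) t := by
        simp only [add_div, sum_add_distrib, sum_div, div_div, dividedDifference, mul_sum,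
          mul_div_assoc]
        rw [sum_comm]
    _ = ∑ a ∈ t, f a / ∏ b ∈ (s ∪ t).erase a, (a - b) +
          ∑ c ∈ s, f c / ∏ b ∈ (s ∪ t).erase c, (c - b) := by
        congr 1
        · exact sum_congr rfl fun a ha => by rw [prod_t a ha]
        · refine sum_congr rfl fun c hc => ?_
          rw [dividedDifference_inv_sub (hst' c hc) ht, prod_s c hc, ← div_eq_mul_inv, div_div]
    _ = dividedDifference f (s ∪ t) := by rw [dividedDifference, sum_union hst, add_comm]

end DividedDifference

theorem phi_pow {m : ℕ} (x : Fin m → ℝ) :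
    Phi (fun i : Fin m => fun t : ℝ => t ^ (i : ℕ)) x = (Matrix.vandermonde x).det := by
  rw [Phi, ← Matrix.det_transpose (Matrix.vandermonde x)]
  rfl

theorem det_vandermonde_pos {R : Type*} [CommRing R] [LinearOrder R] [IsStrictOrderedRing R]
    {m : ℕ} {v : Fin m → R} (hv : StrictMono v) : 0 < (Matrix.vandermonde v).det := by
  rw [Matrix.det_vandermonde]
  exact prod_pos fun i _ => prod_pos fun j hj => sub_pos.mpr (hv (mem_Ioi.mp hj))

theorem phi_snoc_pow_eval {m : ℕ} (P : ℝ[X]) (hP : P.degree < ↑(m + 1)) (x : Fin (m + 1) → ℝ) :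
    Phi (Fin.snoc (fun i : Fin m => fun t : ℝ => t ^ (i : ℕ)) P.eval) x =
      P.coeff m * (Matrix.vandermonde x).det := by
  set A := (Matrix.vandermonde x).transpose
  have hrow : ∀ j, P.eval (x j) = (∑ i : Fin (m + 1), P.coeff i • A i) j := fun j => by
    rw [eval_eq_sum_range'
      (Nat.lt_succ_of_le (natDegree_le_of_degree_le (Order.le_of_lt_succ hP))),
      ← Fin.sum_univ_eq_sum_range, Finset.sum_apply]
    rfl
  have hM : Matrix.of (fun i j =>
        (Fin.snoc (fun i : Fin m => fun t : ℝ => t ^ (i : ℕ)) P.eval : Fin (m + 1) → ℝ → ℝ) i (x j))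
      = A.updateRow (Fin.last m) (∑ i : Fin (m + 1), P.coeff i • A i) := by
    ext i j
    refine Fin.lastCases ?_ (fun i => ?_) i
    · simp [hrow]
    · simp [A]
  rw [Phi, hM, Matrix.det_updateRow_sum, Matrix.det_transpose, smul_eq_mul, Fin.val_last]

theorem phi_snoc_pow {m : ℕ} (f : ℝ → ℝ) {x : Fin (m + 1) → ℝ} (hx : Function.Injective x) :
    Phi (Fin.snoc (fun i : Fin m => fun t : ℝ => t ^ (i : ℕ)) f) x =
      (Matrix.vandermonde x).det * dividedDifference f (image x univ) := by
  set P := Lagrange.interpolate (image x univ) id f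
  have hcard : #(image x univ) = m + 1 := by rw [card_image_of_injective _ hx, card_fin]
  have hnode : ∀ j, f (x j) = P.eval (x j) := fun j =>
    (Lagrange.eval_interpolate_at_node f (Set.injOn_id _) (mem_image_of_mem x (mem_univ j))).symm
  have hP : Phi (Fin.snoc (fun i : Fin m => fun t : ℝ => t ^ (i : ℕ)) f) x =
      Phi (Fin.snoc (fun i : Fin m => fun t : ℝ => t ^ (i : ℕ)) P.eval) x := by
    simp only [Phi]
    congr
    ext i j
    refine Fin.lastCases ?_ (fun i => ?_) i <;> simp [hnode]
  rw [hP, phi_snoc_pow_eval P (hcard ▸ Lagrange.degree_interpolate_lt f (Set.injOn_id _)),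
    dividedDifference_eq_coeff_interpolate, hcard, mul_comm]
  rfl

theorem phi_snoc_pow_nonneg_iff {m : ℕ} (g : ℝ → ℝ) {x : Fin (m + 1) → ℝ} (hx : StrictMono x) :
    0 ≤ Phi (Fin.snoc (fun i : Fin m => fun t : ℝ => t ^ (i : ℕ)) g) x ↔
      0 ≤ dividedDifference g (image x univ) := by
  rw [phi_snoc_pow g hx.injective]
  exact mul_nonneg_iff_of_pos_left (det_vandermonde_pos hx)

theorem divDiff_pow_snoc {k : ℕ} (f : ℝ → ℝ) {x : Fin k → ℝ} (hx : Function.Injective x) {y : ℝ}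
    (hy : y ∉ Set.range x) :
    divDiff (fun i : Fin (k + 1) => fun t : ℝ => t ^ (i : ℕ)) f (Fin.snoc x y) =
      dividedDifference f (insert y (image x univ)) := by
  have hxy := Fin.snoc_injective_of_injective hx hy
  have hsys : (fun i : Fin (k + 1) => if (i : ℕ) + 1 = k + 1 then f else fun t : ℝ => t ^ (i : ℕ))
      = Fin.snoc (fun i : Fin k => fun t : ℝ => t ^ (i : ℕ)) f := by
    funext i
    refine Fin.lastCases ?_ (fun i => ?_) i
    · simp
    · simp [i.isLt.ne]
  have himage : image (Fin.snoc x y : Fin (k + 1) → ℝ) univ = insert y (image x univ) := by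
    ext
    simp [Fin.exists_fin_succ', or_comm, eq_comm]
  rw [divDiff, hsys, phi_snoc_pow f hxy, phi_pow,
    mul_div_cancel_left₀ _ (Matrix.det_vandermonde_ne_zero_iff.mpr hxy), himage]

theorem exists_strictMono_split {α : Type*} [LinearOrder α] {n k ℓ : ℕ} (hk : k ≤ n)
    (hℓ : ℓ ≤ k) {z : Fin (n + 1) → α} (hz : StrictMono z) :
    ∃ (x : Fin k → α) (w : Fin (n - k + 1) → α), StrictMono x ∧ StrictMono w ∧
      (∀ (i : Fin k) (j : Fin (n - k + 1)), (i : ℕ) < ℓ → x i < w j) ∧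
      (∀ (i : Fin k) (j : Fin (n - k + 1)), ℓ ≤ (i : ℕ) → w j < x i) ∧
      image x univ ∪ image w univ = image z univ := by
  let e : Fin k → Fin (n + 1) := fun i =>
    ⟨if (i : ℕ) < ℓ then i else i + (n + 1 - k), by split_ifs <;> omega⟩
  let c : Fin (n - k + 1) → Fin (n + 1) := fun j => ⟨ℓ + j, by omega⟩
  have hcover : image e univ ∪ image c univ = univ := by
    refine eq_univ_of_forall fun b => ?_
    simp only [mem_union, mem_image, mem_univ, true_and, Fin.ext_iff, e, c]
    by_cases h1 : (b : ℕ) < ℓ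
    · exact Or.inl ⟨⟨b, by omega⟩, by simp [h1]⟩
    by_cases h2 : (b : ℕ) ≤ ℓ + (n - k)
    · exact Or.inr ⟨⟨b - ℓ, by omega⟩, by simp; omega⟩
    · exact Or.inl ⟨⟨b - (n + 1 - k), by omega⟩, by simp; split_ifs <;> omega⟩
  refine ⟨z ∘ e, z ∘ c, hz.comp fun i i' h => ?_, hz.comp fun j j' h => ?_,
    fun i j h => hz ?_, fun i j h => hz ?_, ?_⟩
  · simp only [Fin.lt_def, e] at h ⊢; split_ifs <;> omega
  · simp only [Fin.lt_def, c] at h ⊢; omega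
  · simp only [Fin.lt_def, e, c, if_pos h]; omega
  · simp only [Fin.lt_def, e, c, if_neg (not_lt.mpr h)]; omega
  · rw [← image_image, ← image_image, ← image_union, hcover]

theorem divided_difference_monotone_implies_n_monotone_general (n k : ℕ) (hk : k < n) (H : Set ℝ)
    (f : ℝ → ℝ)
    (hyp : ∃ ℓ : ℕ, ℓ ≤ k ∧
      ∀ x : Fin k → ℝ, (∀ i, x i ∈ H) → StrictMono x →
        IsConvexWRT (fun i : Fin (n - k) => fun t : ℝ => t ^ (i : ℕ))
          (H ∩ {y : ℝ | (∀ i : Fin k, (i : ℕ) < ℓ → x i < y) ∧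
            (∀ i : Fin k, ℓ ≤ (i : ℕ) → y < x i)})
          (fun y : ℝ =>
            divDiff (fun i : Fin (k + 1) => fun t : ℝ => t ^ (i : ℕ)) f (Fin.snoc x y))) :
    IsConvexWRT (fun i : Fin n => fun t : ℝ => t ^ (i : ℕ)) H f := by
  obtain ⟨ℓ, hℓk, hconv⟩ := hyp
  intro z hzH hz
  obtain ⟨x, w, hx, hw, hxw, hwx, hunion⟩ := exists_strictMono_split hk.le hℓk hz
  have hH : ∀ y ∈ image x univ ∪ image w univ, y ∈ H := by
    rw [hunion]
    simpa using hzH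
  have hxH : ∀ i, x i ∈ H := fun i => hH _ (by simp)
  have hwS : ∀ j, w j ∈ H ∩ {y : ℝ | (∀ i : Fin k, (i : ℕ) < ℓ → x i < y) ∧
      (∀ i : Fin k, ℓ ≤ (i : ℕ) → y < x i)} :=
    fun j => ⟨hH _ (by simp), fun i hi => hxw i j hi, fun i hi => hwx i j hi⟩
  have hne : ∀ i j, x i ≠ w j := fun i j =>
    (lt_or_ge (i : ℕ) ℓ).elim (fun h => (hxw i j h).ne) fun h => (hwx i j h).ne'
  have hdisj : Disjoint (image x univ) (image w univ) := by
    simpa [disjoint_iff_ne] using hne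
  have hG := hconv x hxH hx w hwS hw
  rw [phi_snoc_pow_nonneg_iff _ hw] at hG
  rw [phi_snoc_pow_nonneg_iff f hz, ← hunion,
    ← dividedDifference_dividedDifference_insert f hdisj (by simp)]
  convert hG using 1
  refine dividedDifference_congr fun y hy => ?_
  obtain ⟨j, -, rfl⟩ := mem_image.mp hy
  rw [divDiff_pow_snoc f hx.injective fun ⟨i, hi⟩ => hne i j hi]

/-- Corollary 2, (iii) ⇒ (i): if there exists `ℓ ∈ {0,…,k}` such that, for each
`x₁ < … < x_k` in `H`, the classical divided difference function `x ↦ [x₁,…,x_k,x; f]` is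
`(n-k)`-monotone on `H ∩ (-∞, x₁)` if `ℓ = 0`, on `H ∩ (x_ℓ, x_{ℓ+1})` if `0 < ℓ < k`, and
on `H ∩ (x_k, ∞)` if `ℓ = k` (the three cases are captured uniformly by the set
`{y | x_i < y for i ≤ ℓ and y < x_i for i > ℓ}`), then `f` is `n`-monotone on `H`. -/
theorem divided_difference_monotone_implies_n_monotone (n k : ℕ) (hk : k < n) (H : Set ℝ)
    (hH : n + 1 ≤ H.ncard ∨ H.Infinite) (f : ℝ → ℝ)
    (hyp : ∃ ℓ : ℕ, ℓ ≤ k ∧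
      ∀ x : Fin k → ℝ, (∀ i, x i ∈ H) → StrictMono x →
        IsConvexWRT (fun i : Fin (n - k) => fun t : ℝ => t ^ (i : ℕ))
          (H ∩ {y : ℝ | (∀ i : Fin k, (i : ℕ) < ℓ → x i < y) ∧
            (∀ i : Fin k, ℓ ≤ (i : ℕ) → y < x i)})
          (fun y : ℝ =>
            divDiff (fun i : Fin (k + 1) => fun t : ℝ => t ^ (i : ℕ)) f (Fin.snoc x y))) :
    IsConvexWRT (fun i : Fin n => fun t : ℝ => t ^ (i : ℕ)) H f :=
  divided_difference_monotone_implies_n_monotone_general n k hk H f hyp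
end

section
/- Let H = (−π, 0) and let f : H → ℝ. Then f is convex with respect to the 3-dimensional positive Chebyshev system (1, cos, sin) on H if and only if for each x₁ ∈ H, the function x ↦ (f(x) − f(x₁)) / (cos x − cos x₁) is convex on H ∖ {x₁} with respect to the 2-dimensional Chebyshev system (1, −cot((x₁ + ·)/2)). -/
open Real

noncomputable def slopeWRT (u v : ℝ → ℝ) (x₀ y : ℝ) : ℝ :=
  (v y - v x₀) / (u y - u x₀)

theorem Phi_congr {m : ℕ} {ω ω' : Fin m → ℝ → ℝ} {x : Fin m → ℝ}
    (h : ∀ i j, ω i (x j) = ω' i (x j)) : Phi ω x = Phi ω' x := by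
  simp only [Phi, h]

theorem isConvexWRT_congr {m : ℕ} {ω ω' : Fin m → ℝ → ℝ} {S : Set ℝ} {f f' : ℝ → ℝ}
    (hω : ∀ i, Set.EqOn (ω i) (ω' i) S) (hf : Set.EqOn f f' S) :
    IsConvexWRT ω S f ↔ IsConvexWRT ω' S f' := by
  have key (x : Fin (m + 1) → ℝ) (hx : ∀ i, x i ∈ S) :
      Phi (Fin.snoc ω f) x = Phi (Fin.snoc ω' f') x := by
    refine Phi_congr fun i j => ?_
    induction i using Fin.lastCases with
    | last => simpa using hf (hx j)
    | cast i => simpa using hω i (hx j)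
  exact forall_congr' fun x => imp_congr_right fun hx => by rw [key x hx]

theorem Phi_cons_one_insertNth {n : ℕ} (ω : Fin n → ℝ → ℝ) (k : Fin (n + 1)) (x₀ : ℝ)
    (y : Fin n → ℝ) :
    Phi (Fin.cons (fun _ => 1) ω) (k.insertNth x₀ y) =
      (-1) ^ (k : ℕ) * Phi (fun i t => ω i t - ω i x₀) y := by
  set x : Fin (n + 1) → ℝ := k.insertNth x₀ y
  set A : Matrix (Fin (n + 1)) (Fin (n + 1)) ℝ :=
    Matrix.of fun i j => (Fin.cons (fun _ => 1) ω : Fin (n + 1) → ℝ → ℝ) i (x j)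
  set B : Matrix (Fin (n + 1)) (Fin (n + 1)) ℝ :=
    Matrix.of fun i j => A i j - if j = k then 0 else A i k
  have hAB : A.det = B.det := by
    rw [← Matrix.det_transpose A, ← Matrix.det_transpose B]
    refine Matrix.det_eq_of_forall_row_eq_smul_add_const (fun j => if j = k then 0 else 1) k
      (by simp) fun j i => ?_
    simp only [B, Matrix.transpose_apply, Matrix.of_apply]
    split_ifs <;> ring
  rw [Phi, show Matrix.of _ = A from rfl, hAB, Matrix.det_succ_row_zero, Finset.sum_eq_single k]
  · simp [B, A, x, Phi, Matrix.submatrix, Fin.succAbove_ne]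
  · intro j _ hj
    simp [B, A, x, hj]
  · simp

theorem Phi_eq_prod_mul_Phi_div {m : ℕ} (ω : Fin m → ℝ → ℝ) (d : ℝ → ℝ) (y : Fin m → ℝ)
    (hd : ∀ j, d (y j) ≠ 0) :
    Phi ω y = (∏ j, d (y j)) * Phi (fun i t => ω i t / d t) y := by
  rw [Phi, Phi, ← Matrix.det_mul_row]
  congr 1
  ext i j
  simp [mul_div_cancel₀ _ (hd j)]

theorem Phi_snoc_insertNth {n : ℕ} (u : ℝ → ℝ) (ρ : Fin n → ℝ → ℝ) (f : ℝ → ℝ)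
    (k : Fin (n + 3)) (x₀ : ℝ) (y : Fin (n + 2) → ℝ) (hy : ∀ j, u (y j) ≠ u x₀) :
    Phi (Fin.snoc (Fin.cons (fun _ => 1) (Fin.cons u ρ)) f) (k.insertNth x₀ y) =
      (-1) ^ (k : ℕ) * (∏ j, (u (y j) - u x₀)) *
        Phi (Fin.snoc (Fin.cons (fun _ => 1) fun i => slopeWRT u (ρ i) x₀) (slopeWRT u f x₀))
          y := by
  rw [← Fin.cons_snoc_eq_snoc_cons, Phi_cons_one_insertNth,
    Phi_eq_prod_mul_Phi_div _ (fun t => u t - u x₀) y fun j => sub_ne_zero.2 (hy j), mul_assoc,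
    ← Fin.cons_snoc_eq_snoc_cons, ← Fin.cons_snoc_eq_snoc_cons]
  congr 2
  refine Phi_congr fun i j => ?_
  induction i using Fin.cases with
  | zero => simp [sub_ne_zero.2 (hy j)]
  | succ i => induction i using Fin.lastCases <;> simp [slopeWRT]

theorem neg_one_pow_mul_prod_sub_pos {R : Type*} [CommRing R] [LinearOrder R]
    [IsStrictOrderedRing R] {n : ℕ} {k : Fin (n + 1)} {b : R} {a : Fin n → R}
    (h : StrictMono (k.insertNth b a)) : 0 < (-1) ^ (k : ℕ) * ∏ j, (a j - b) := by
  obtain ⟨-, hlt, hgt⟩ := (Fin.strictMono_insertNth_iff k b a).1 h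
  have hcard : (Finset.univ.filter fun j : Fin n => (j : ℕ) < k).card = k := by
    rw [Fin.card_filter_val_lt, min_eq_right (Nat.lt_succ_iff.1 k.is_lt)]
  have hsign : (-1) ^ (k : ℕ) * ∏ j, (a j - b) =
      ∏ j : Fin n, if (j : ℕ) < k then b - a j else a j - b := by
    rw [Finset.prod_ite,
      ← Finset.prod_filter_mul_prod_filter_not Finset.univ fun j : Fin n => (j : ℕ) < k]
    have hneg : ∀ j, b - a j = -(a j - b) := fun j => (neg_sub _ _).symm
    simp only [hneg, Finset.prod_neg, hcard]
    ring
  rw [hsign]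
  refine Finset.prod_pos fun j _ => ?_
  split_ifs with hj
  · exact sub_pos.2 (hlt j hj)
  · exact sub_pos.2 (hgt j (not_lt.1 hj))

theorem exists_strictMono_insertNth {α : Type*} [LinearOrder α] {n : ℕ} {y : Fin n → α}
    (hy : StrictMono y) {a : α} (ha : ∀ j, y j ≠ a) :
    ∃ k : Fin (n + 1), StrictMono (k.insertNth a y) := by
  have hP : ∃ m, ∀ j : Fin n, m ≤ (j : ℕ) → a < y j :=
    ⟨n, fun j hj => absurd j.is_lt (not_lt.2 hj)⟩
  have hle : Nat.find hP ≤ n := Nat.find_min' hP fun j hj => absurd j.is_lt (not_lt.2 hj)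
  refine ⟨⟨Nat.find hP, Nat.lt_succ_of_le hle⟩, (Fin.strictMono_insertNth_iff _ _ _).2
    ⟨hy, fun j hj => ?_, fun j hj => Nat.find_spec hP j hj⟩⟩
  obtain ⟨i, hji, hi⟩ : ∃ i : Fin n, (j : ℕ) ≤ i ∧ ¬a < y i := by
    simpa using Nat.find_min hP hj
  exact (hy.monotone hji).trans_lt ((not_lt.1 hi).lt_of_ne (ha i))

theorem Phi_snoc_insertNth_nonneg_iff {n : ℕ} {u : ℝ → ℝ} {S : Set ℝ} (hu : StrictMonoOn u S)
    (ρ : Fin n → ℝ → ℝ) (f : ℝ → ℝ) {k : Fin (n + 3)} {x₀ : ℝ} {y : Fin (n + 2) → ℝ}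
    (hS : ∀ i, (k.insertNth x₀ y : Fin (n + 3) → ℝ) i ∈ S) (hmono : StrictMono (k.insertNth x₀ y)) :
    0 ≤ Phi (Fin.snoc (Fin.cons (fun _ => 1) (Fin.cons u ρ)) f) (k.insertNth x₀ y) ↔
      0 ≤ Phi (Fin.snoc (Fin.cons (fun _ => 1) fun i => slopeWRT u (ρ i) x₀)
        (slopeWRT u f x₀)) y := by
  obtain ⟨hx₀, hyS⟩ := k.forall_iff_succAbove.1 hS
  simp only [Fin.insertNth_apply_same, Fin.insertNth_apply_succAbove] at hx₀ hyS
  obtain ⟨hy, hlt, hgt⟩ := (Fin.strictMono_insertNth_iff k x₀ y).1 hmono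
  have hu_mono : StrictMono (k.insertNth (u x₀) (u ∘ y)) :=
    (Fin.strictMono_insertNth_iff k _ _).2 ⟨fun i j hij => hu (hyS i) (hyS j) (hy hij),
      fun j hj => hu (hyS j) hx₀ (hlt j hj), fun j hj => hu hx₀ (hyS j) (hgt j hj)⟩
  rw [Phi_snoc_insertNth u ρ f k x₀ y fun j => by
    simpa using hu_mono.injective.ne (k.succAbove_ne j)]
  exact mul_nonneg_iff_of_pos_left (neg_one_pow_mul_prod_sub_pos hu_mono)

theorem isConvexWRT_cons_one_cons_iff {n : ℕ} {u : ℝ → ℝ} {S : Set ℝ} (hu : StrictMonoOn u S)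
    (ρ : Fin n → ℝ → ℝ) (f : ℝ → ℝ) :
    IsConvexWRT (Fin.cons (fun _ => 1) (Fin.cons u ρ)) S f ↔
      ∀ x₀ ∈ S, IsConvexWRT (Fin.cons (fun _ => 1) fun i => slopeWRT u (ρ i) x₀) (S \ {x₀})
        (slopeWRT u f x₀) := by
  constructor
  · intro h x₀ hx₀ y hyS hy
    obtain ⟨k, hk⟩ := exists_strictMono_insertNth hy fun j => (hyS j).2
    have hS : ∀ i, (k.insertNth x₀ y : Fin (n + 3) → ℝ) i ∈ S :=
      k.forall_iff_succAbove.2 ⟨by simpa using hx₀, fun j => by simpa using (hyS j).1⟩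
    exact (Phi_snoc_insertNth_nonneg_iff hu ρ f hS hk).1 (h _ hS hk)
  · intro h x hS hx
    obtain ⟨x₀, y, rfl⟩ : ∃ x₀ y, x = (0 : Fin (n + 3)).insertNth x₀ y :=
      ⟨x 0, Fin.tail x, by rw [Fin.insertNth_zero', Fin.cons_self_tail]⟩
    refine (Phi_snoc_insertNth_nonneg_iff hu ρ f hS hx).2 (h x₀ (by simpa using hS 0) y
      (fun j => ⟨by simpa using hS j.succ, by simpa using hx.injective.ne (Fin.succ_ne_zero j)⟩)
      ((Fin.strictMono_insertNth_iff _ _ _).1 hx).1)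

theorem strictMonoOn_cos_Ioo : StrictMonoOn cos (Set.Ioo (-π) 0) := fun x hx y hy hxy => by
  rw [← cos_neg x, ← cos_neg y]
  exact strictAntiOn_cos ⟨by linarith [hy.2], by linarith [hy.1]⟩
    ⟨by linarith [hx.2], by linarith [hx.1]⟩ (neg_lt_neg hxy)

theorem slopeWRT_cos_sin {x₀ y : ℝ} (h : sin ((y - x₀) / 2) ≠ 0) :
    slopeWRT cos sin x₀ y = -cot ((x₀ + y) / 2) := by
  rw [slopeWRT, sin_sub_sin, cos_sub_cos, cot_eq_cos_div_sin, add_comm x₀,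
    show -2 * sin ((y + x₀) / 2) * sin ((y - x₀) / 2) =
      2 * sin ((y - x₀) / 2) * -sin ((y + x₀) / 2) by ring,
    mul_div_mul_left _ _ (mul_ne_zero two_ne_zero h), div_neg]

/-- The Example: for `H = (-π, 0)` and `f : H → ℝ`, `f` is convex with respect to the
`3`-dimensional positive Chebyshev system `(1, cos, sin)` on `H` if and only if for each
`x₁ ∈ H` the function `x ↦ (f(x) - f(x₁)) / (cos x - cos x₁)` is convex on `H \ {x₁}` with
respect to the `2`-dimensional Chebyshev system `(1, -cot((x₁ + ·)/2))`. -/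
theorem trig_convexity_example (f : ℝ → ℝ) :
    IsConvexWRT ![fun _ : ℝ => (1 : ℝ), Real.cos, Real.sin] (Set.Ioo (-Real.pi) 0) f ↔
      ∀ x₁ ∈ Set.Ioo (-Real.pi) 0,
        IsConvexWRT ![fun _ : ℝ => (1 : ℝ), fun x : ℝ => -Real.cot ((x₁ + x) / 2)]
          (Set.Ioo (-Real.pi) 0 \ {x₁})
          (fun x : ℝ => (f x - f x₁) / (Real.cos x - Real.cos x₁)) := by
  refine (isConvexWRT_cons_one_cons_iff strictMonoOn_cos_Ioo ![sin] f).trans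
    (forall₂_congr fun x₁ hx₁ => isConvexWRT_congr (fun i y hy => ?_) fun _ _ => rfl)
  fin_cases i
  · rfl
  · obtain ⟨⟨hy₁, hy₂⟩, hne⟩ := hy
    refine slopeWRT_cos_sin fun h => hne ?_
    have hhalf := (sin_eq_zero_iff_of_lt_of_lt (by linarith [hx₁.2]) (by linarith [hx₁.1])).1 h
    exact Set.mem_singleton_iff.2 (by linarith)
end
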